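/- arXiv:1312.6297 — 9 statements merged into one kernel-verified Lean document; each statement's English description precedes it below -/
import Mathlib

section
/- Let I ⊆ J ⊆ ℝ be intervals containing 0 as an interior point. If g : J → ℝ is additive on J (i.e., g(x+y) = g(x) + g(y) whenever x, y, x+y ∈ J) and Lebesgue measurable on I, then there exists β ∈ ℝ such that g(x) = βx for all x ∈ J. -/
/-!
Dividing by a large integer moves any point into a small ball `B` around `0` on which `g` is
additive and measurable, so `G x = n * g (x / n)` (for any `n` with `x / n ∈ B`) is a well-defined
additive extension of `g|B` to all of `ℝ`. It is measurable, hence continuous (Steinhaus), hence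
linear; and on the star-shaped set `J` local additivity already gives `g x = n * g (x / n)`, so
`g = G` there.
-/

open MeasureTheory Set Metric

lemma StarConvex.natCast_mul_mem {s : Set ℝ} (hs : StarConvex ℝ 0 s) {n k : ℕ} (hk : k ≤ n)
    {x : ℝ} (hx : n * x ∈ s) : k * x ∈ s := by
  rcases n.eq_zero_or_pos with rfl | hn
  · obtain rfl := Nat.le_zero.1 hk
    simpa using hs.mem ⟨_, hx⟩
  · have hkn : (k : ℝ) / n ≤ 1 := div_le_one_of_le₀ (by exact_mod_cast hk) n.cast_nonneg
    have hn0 : (n : ℝ) ≠ 0 := by positivity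
    convert hs.smul_mem hx (by positivity) hkn using 1
    rw [smul_eq_mul]
    field_simp

def IsAdditiveOn (J : Set ℝ) (g : ℝ → ℝ) : Prop :=
  ∀ x ∈ J, ∀ y ∈ J, x + y ∈ J → g (x + y) = g x + g y

namespace IsAdditiveOn

variable {J : Set ℝ} {g : ℝ → ℝ}

lemma mono (hg : IsAdditiveOn J g) {K : Set ℝ} (hKJ : K ⊆ J) : IsAdditiveOn K g :=
  fun x hx y hy hxy => hg x (hKJ hx) y (hKJ hy) (hKJ hxy)

lemma map_zero (hg : IsAdditiveOn J g) (h0 : (0 : ℝ) ∈ J) : g 0 = 0 := by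
  simpa using hg 0 h0 0 h0 (by simpa using h0)

lemma map_natCast_mul (hg : IsAdditiveOn J g) (hJ : StarConvex ℝ 0 J) {n : ℕ} {x : ℝ}
    (hx : n * x ∈ J) : g (n * x) = n * g x := by
  have hmem {k : ℕ} (hk : k ≤ n) : k * x ∈ J := hJ.natCast_mul_mem hk hx
  suffices ∀ k ≤ n, g (k * x) = k * g x from this n le_rfl
  intro k hk
  induction k with
  | zero => simpa using hg.map_zero (by simpa using hmem (Nat.zero_le n))
  | succ k ih =>
    have hk' : k ≤ n := k.le_succ.trans hk
    have hsum := hg _ (hmem hk') x (by simpa using hmem (k.succ_pos.trans_le hk))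
      (by simpa [add_mul] using hmem hk)
    push_cast
    rw [add_mul, one_mul, hsum, ih hk']
    ring

end IsAdditiveOn

section BallExtension

variable {δ : ℝ} {g : ℝ → ℝ}

noncomputable def ballExtensionScale (δ x : ℝ) : ℕ := ⌈|x| / δ⌉₊ + 1

noncomputable def ballExtension (δ : ℝ) (g : ℝ → ℝ) (x : ℝ) : ℝ :=
  ballExtensionScale δ x * g (x / ballExtensionScale δ x)

lemma abs_lt_ballExtensionScale_mul (hδ : 0 < δ) (x : ℝ) :
    |x| < ballExtensionScale δ x * δ := by
  rw [← div_lt_iff₀ hδ, ballExtensionScale]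
  push_cast
  linarith [Nat.le_ceil (|x| / δ)]

lemma measurable_ballExtensionScale (δ : ℝ) :
    Measurable fun x => (ballExtensionScale δ x : ℝ) :=
  measurable_from_nat.comp ((measurable_id.abs.div_const δ).nat_ceil.add_const 1)

lemma natCast_pos_of_abs_lt_mul {x : ℝ} {k : ℕ} (hx : |x| < k * δ) : (0 : ℝ) < k := by
  by_contra! hk
  simp [le_antisymm hk k.cast_nonneg, (abs_nonneg x).not_gt] at hx

lemma div_mem_ball_of_abs_lt {x : ℝ} {k : ℕ} (hx : |x| < k * δ) : x / k ∈ ball 0 δ := by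
  have hk := natCast_pos_of_abs_lt_mul hx
  rw [mem_ball_zero_iff, Real.norm_eq_abs, abs_div, Nat.abs_cast, div_lt_iff₀ hk, mul_comm]
  exact hx

lemma ballExtension_eq (hg : IsAdditiveOn (ball 0 δ) g) (hδ : 0 < δ) {x : ℝ} {k : ℕ}
    (hx : |x| < k * δ) : ballExtension δ g x = k * g (x / k) := by
  set m := ballExtensionScale δ x
  have hm : |x| < m * δ := abs_lt_ballExtensionScale_mul hδ x
  have hk0 : (k : ℝ) ≠ 0 := (natCast_pos_of_abs_lt_mul hx).ne'
  have hm0 : (m : ℝ) ≠ 0 := (natCast_pos_of_abs_lt_mul hm).ne'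
  have hB : StarConvex ℝ 0 (ball (0 : ℝ) δ) := (convex_ball 0 δ).starConvex (mem_ball_self hδ)
  have hxm : (k : ℝ) * (x / (m * k)) = x / m := by field_simp
  have hxk : (m : ℝ) * (x / (m * k)) = x / k := by field_simp
  have e1 := hg.map_natCast_mul hB (hxm ▸ div_mem_ball_of_abs_lt hm)
  have e2 := hg.map_natCast_mul hB (hxk ▸ div_mem_ball_of_abs_lt hx)
  rw [hxm] at e1
  rw [hxk] at e2
  rw [ballExtension, e1, e2]
  ring

lemma ballExtension_add (hg : IsAdditiveOn (ball 0 δ) g) (hδ : 0 < δ) (x y : ℝ) :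
    ballExtension δ g (x + y) = ballExtension δ g x + ballExtension δ g y := by
  set k := ballExtensionScale δ (|x| + |y|)
  have hk : |(|x| + |y|)| < k * δ := abs_lt_ballExtensionScale_mul hδ _
  rw [abs_of_nonneg (by positivity)] at hk
  have hxk : |x| < k * δ := by linarith [abs_nonneg y]
  have hyk : |y| < k * δ := by linarith [abs_nonneg x]
  have hxyk : |x + y| < k * δ := (abs_add_le x y).trans_lt hk
  rw [ballExtension_eq hg hδ hxk, ballExtension_eq hg hδ hyk, ballExtension_eq hg hδ hxyk, add_div,
    hg _ (div_mem_ball_of_abs_lt hxk) _ (div_mem_ball_of_abs_lt hyk)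
      (add_div x y k ▸ div_mem_ball_of_abs_lt hxyk)]
  ring

lemma ballExtension_eqOn {J : Set ℝ} (hJ : StarConvex ℝ 0 J) (hg : IsAdditiveOn J g) :
    EqOn (ballExtension δ g) g J := by
  intro x hx
  have hm0 : (ballExtensionScale δ x : ℝ) ≠ 0 := Nat.cast_ne_zero.2 (Nat.succ_ne_zero _)
  have hx' : (ballExtensionScale δ x : ℝ) * (x / ballExtensionScale δ x) = x := by field_simp
  rw [ballExtension, ← hg.map_natCast_mul hJ (hx'.symm ▸ hx), hx']

lemma measurable_ballExtension (hδ : 0 < δ) (hg : Measurable ((ball 0 δ).domRestrict g)) :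
    Measurable (ballExtension δ g) := by
  have hmem (x : ℝ) : x / ballExtensionScale δ x ∈ ball 0 δ :=
    div_mem_ball_of_abs_lt (abs_lt_ballExtensionScale_mul hδ x)
  have hcomp : Measurable fun x => (ball 0 δ).domRestrict g ⟨x / ballExtensionScale δ x, hmem x⟩ :=
    hg.comp (measurable_id.div (measurable_ballExtensionScale δ)).subtype_mk
  exact (measurable_ballExtensionScale δ).mul hcomp

noncomputable def ballExtensionHom (hg : IsAdditiveOn (ball 0 δ) g) (hδ : 0 < δ) : ℝ →+ ℝ :=
  AddMonoidHom.mk' (ballExtension δ g) (ballExtension_add hg hδ)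

end BallExtension

lemma IsAdditiveOn.exists_eq_mul_of_measurable_on_ball {J : Set ℝ} {g : ℝ → ℝ} {δ : ℝ}
    (hJ : StarConvex ℝ 0 J) (hg : IsAdditiveOn J g) (hδ : 0 < δ) (hδJ : ball 0 δ ⊆ J)
    (hmeas : Measurable ((ball 0 δ).domRestrict g)) : ∃ β : ℝ, ∀ x ∈ J, g x = β * x := by
  set G := ballExtensionHom (hg.mono hδJ) hδ
  have hG : Continuous G :=
    Measure.AddMonoidHom.continuous_of_measurable G (measurable_ballExtension hδ hmeas)
  refine ⟨G 1, fun x hx => ?_⟩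
  have hlin : G x = x * G 1 := by simpa using map_real_smul G hG x 1
  rw [← ballExtension_eqOn hJ hg hx, mul_comm]
  exact hlin

theorem additive_locally_measurable_is_linear_general
    (I J : Set ℝ) (hIJ : I ⊆ J) (hJconv : Convex ℝ J)
    (h0I : (0 : ℝ) ∈ interior I)
    (g : ℝ → ℝ)
    (hmeas : Measurable (I.restrict g))
    (hadd : ∀ x ∈ J, ∀ y ∈ J, x + y ∈ J → g (x + y) = g x + g y) :
    ∃ β : ℝ, ∀ x ∈ J, g x = β * x := by
  obtain ⟨δ, hδ, hδI⟩ := Metric.mem_nhds_iff.1 (mem_interior_iff_mem_nhds.1 h0I)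
  exact IsAdditiveOn.exists_eq_mul_of_measurable_on_ball
    (hJconv.starConvex (hIJ (interior_subset h0I))) hadd hδ (hδI.trans hIJ)
    (hmeas.comp (measurable_inclusion hδI))

theorem additive_locally_measurable_is_linear
    (I J : Set ℝ) (hIJ : I ⊆ J) (hIconv : Convex ℝ I) (hJconv : Convex ℝ J)
    (h0I : (0 : ℝ) ∈ interior I)
    (g : ℝ → ℝ)
    (hmeas : Measurable (I.restrict g))
    (hadd : ∀ x ∈ J, ∀ y ∈ J, x + y ∈ J → g (x + y) = g x + g y) :
    ∃ β : ℝ, ∀ x ∈ J, g x = β * x :=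
  additive_locally_measurable_is_linear_general I J hIJ hJconv h0I g hmeas hadd
end

section
/- Let I ⊆ J ⊆ ℝ be intervals containing 0 as an interior point. If g : J → ℝ is additive on J and continuous on I, then g is linear on J: g(x) = βx for some β ∈ ℝ. -/
/-!
Additivity on a convex set containing `0` gives `g (n • y) = n • g y`, hence
`g (q • c) = q • g c` for rational `q ∈ [0, 1]`. Continuity along the segment `[0, c]` extends
this to all real `t ∈ [0, 1]`, and writing `s • c = n • ((s / n) • c)` to all `s ≥ 0`. In
dimension one, a point `c > 0` of `I` and its opposite `-c` cover the two halves of `J`, with the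
same slope since `g (-c) = -g c`.
-/

open Set

theorem Convex.nsmul_mem_of_le {V : Type*} [AddCommGroup V] [Module ℝ V] {J : Set V}
    (hJ : Convex ℝ J) (h0 : (0 : V) ∈ J) {y : V} {k n : ℕ} (hny : n • y ∈ J) (hkn : k ≤ n) :
    k • y ∈ J := by
  rcases Nat.eq_zero_or_pos n with rfl | hn
  · simpa [Nat.le_zero.mp hkn] using h0
  have hn' : (0 : ℝ) < n := by exact_mod_cast hn
  have hmem := hJ.smul_mem_of_zero_mem h0 hny
    (t := (k : ℝ) / n) ⟨by positivity, div_le_one_of_le₀ (by exact_mod_cast hkn) hn'.le⟩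
  rwa [← Nat.cast_smul_eq_nsmul ℝ n, smul_smul, div_mul_cancel₀ _ hn'.ne',
    Nat.cast_smul_eq_nsmul] at hmem

section

variable {V E : Type*} [AddCommGroup V] [AddCommGroup E]

def AdditiveOn (g : V → E) (J : Set V) : Prop :=
  ∀ x ∈ J, ∀ y ∈ J, x + y ∈ J → g (x + y) = g x + g y

namespace AdditiveOn

variable {g : V → E} {J : Set V}

theorem map_zero (hg : AdditiveOn g J) (h0 : (0 : V) ∈ J) : g 0 = 0 := by
  simpa using hg 0 h0 0 h0 (by simpa using h0)

theorem map_neg (hg : AdditiveOn g J) (h0 : (0 : V) ∈ J) {x : V} (hx : x ∈ J) (hnx : -x ∈ J) :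
    g (-x) = -g x := by
  have h := hg x hx (-x) hnx (by simpa using h0)
  rw [add_neg_cancel, hg.map_zero h0] at h
  exact (neg_eq_of_add_eq_zero_right h.symm).symm

variable [Module ℝ V]

theorem map_nsmul (hg : AdditiveOn g J) (hJ : Convex ℝ J) (h0 : (0 : V) ∈ J) {y : V} :
    ∀ n : ℕ, n • y ∈ J → g (n • y) = n • g y
  | 0, _ => by simpa using hg.map_zero h0
  | n + 1, hny => by
    have hn : n • y ∈ J := hJ.nsmul_mem_of_le h0 hny n.le_succ
    have h1 : y ∈ J := by simpa using hJ.nsmul_mem_of_le h0 hny (Nat.le_add_left 1 n)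
    rw [succ_nsmul, hg _ hn _ h1 (by rwa [← succ_nsmul]), map_nsmul hg hJ h0 n hn, succ_nsmul]

section Module

variable [Module ℝ E]

theorem map_natCast_div_smul (hg : AdditiveOn g J) (hJ : Convex ℝ J) (h0 : (0 : V) ∈ J)
    {c : V} (hc : c ∈ J) {k n : ℕ} (hkn : k ≤ n) :
    g (((k : ℝ) / n) • c) = ((k : ℝ) / n) • g c := by
  rcases Nat.eq_zero_or_pos n with rfl | hn
  · simpa using hg.map_zero h0
  have hn' : (n : ℝ) ≠ 0 := by exact_mod_cast hn.ne'
  set y : V := ((n : ℝ)⁻¹) • c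
  have hny : n • y = c := by rw [← Nat.cast_smul_eq_nsmul ℝ, smul_inv_smul₀ hn']
  have hky : ((k : ℝ) / n) • c = k • y := by
    rw [← Nat.cast_smul_eq_nsmul ℝ, smul_smul, div_eq_mul_inv]
  rw [hky, hg.map_nsmul hJ h0 k (hJ.nsmul_mem_of_le h0 (hny ▸ hc) hkn), ← hny,
    hg.map_nsmul hJ h0 n (hny ▸ hc), ← Nat.cast_smul_eq_nsmul ℝ n, smul_smul,
    div_mul_cancel₀ _ hn', Nat.cast_smul_eq_nsmul]

theorem map_smul_of_mem_Icc [TopologicalSpace E] [T2Space E] [ContinuousSMul ℝ E]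
    (hg : AdditiveOn g J) (hJ : Convex ℝ J) (h0 : (0 : V) ∈ J) {c : V} (hc : c ∈ J)
    (hcont : ContinuousOn (fun t : ℝ => g (t • c)) (Icc 0 1)) {t : ℝ} (ht : t ∈ Icc 0 1) :
    g (t • c) = t • g c := by
  set S : Set ℝ := Icc 0 1 ∩ range ((↑) : ℚ → ℝ)
  have hS : Icc (0 : ℝ) 1 ⊆ closure S := by
    rw [← closure_Ioo zero_ne_one, ← closure_closure (s := S)]
    refine closure_mono ((Rat.denseRange_cast.open_subset_closure_inter isOpen_Ioo).trans ?_)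
    exact closure_mono (inter_subset_inter_left _ Ioo_subset_Icc_self)
  refine EqOn.of_subset_closure (s := S) ?_ hcont
    (continuous_id.smul continuous_const).continuousOn inter_subset_left hS ht
  rintro _ ⟨⟨hq0, hq1⟩, q, rfl⟩
  have hnum : (0 : ℤ) ≤ q.num := Rat.num_nonneg.mpr (by exact_mod_cast hq0)
  have hq : (q : ℝ) = (q.num.toNat : ℝ) / q.den := by
    rw [Rat.cast_def]; congr 1; exact_mod_cast (Int.toNat_of_nonneg hnum).symm
  have hkn : q.num.toNat ≤ q.den := by
    have : (q.num.toNat : ℝ) ≤ q.den := by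
      rwa [hq, div_le_one (by exact_mod_cast q.den_pos)] at hq1
    exact_mod_cast this
  change g ((q : ℝ) • c) = (q : ℝ) • g c
  rw [hq]
  exact hg.map_natCast_div_smul hJ h0 hc hkn

theorem map_smul_of_nonneg [TopologicalSpace E] [T2Space E] [ContinuousSMul ℝ E]
    (hg : AdditiveOn g J) (hJ : Convex ℝ J) (h0 : (0 : V) ∈ J) {c : V} (hc : c ∈ J)
    (hcont : ContinuousOn (fun t : ℝ => g (t • c)) (Icc 0 1)) {s : ℝ} (hs : 0 ≤ s)
    (hsc : s • c ∈ J) : g (s • c) = s • g c := by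
  obtain ⟨n, hsn⟩ := exists_nat_gt s
  have hn : (n : ℝ) ≠ 0 := (hs.trans_lt hsn).ne'
  have ht : s / n ∈ Icc (0 : ℝ) 1 := ⟨by positivity, div_le_one_of_le₀ hsn.le (by positivity)⟩
  have hsc' : s • c = n • ((s / n) • c) := by
    rw [← Nat.cast_smul_eq_nsmul ℝ, smul_smul, mul_div_cancel₀ _ hn]
  rw [hsc', hg.map_nsmul hJ h0 n (hsc' ▸ hsc), hg.map_smul_of_mem_Icc hJ h0 hc hcont ht,
    ← Nat.cast_smul_eq_nsmul ℝ, smul_smul, mul_div_cancel₀ _ hn]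

end Module

end AdditiveOn

end

theorem additive_locally_continuous_is_linear
    (I J : Set ℝ) (hIJ : I ⊆ J) (hIconv : Convex ℝ I) (hJconv : Convex ℝ J)
    (h0I : (0 : ℝ) ∈ interior I)
    (g : ℝ → ℝ)
    (hcont : ContinuousOn g I)
    (hadd : ∀ x ∈ J, ∀ y ∈ J, x + y ∈ J → g (x + y) = g x + g y) :
    ∃ β : ℝ, ∀ x ∈ J, g x = β * x := by
  have hg : AdditiveOn g J := hadd
  have h0J : (0 : ℝ) ∈ J := hIJ (interior_subset h0I)
  obtain ⟨ε, hε, hball⟩ := Metric.mem_nhds_iff.mp (mem_interior_iff_mem_nhds.mp h0I)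
  obtain ⟨c, hc, hcI, hncI⟩ : ∃ c > 0, c ∈ I ∧ -c ∈ I :=
    ⟨ε / 2, half_pos hε, hball (by simp [abs_of_pos hε, hε]),
      hball (by simp [abs_of_pos hε, hε])⟩
  refine ⟨g c / c, fun x hx => ?_⟩
  have hlin {d : ℝ} (hd : d ∈ I) (hd0 : d ≠ 0) (hxd : 0 ≤ x / d) : g x = g d / d * x := by
    have hray : ContinuousOn (fun t : ℝ => g (t • d)) (Icc 0 1) :=
      hcont.comp (by fun_prop) fun _ ht => hIconv.smul_mem_of_zero_mem (interior_subset h0I) hd ht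
    have h := hg.map_smul_of_nonneg hJconv h0J (hIJ hd) hray hxd
      (by rwa [smul_eq_mul, div_mul_cancel₀ _ hd0])
    rw [smul_eq_mul, smul_eq_mul, div_mul_cancel₀ _ hd0] at h
    rw [h]; ring
  rcases le_total 0 x with hx0 | hx0
  · exact hlin hcI hc.ne' (by positivity)
  · rw [hlin hncI (neg_ne_zero.mpr hc.ne') (div_nonneg_of_nonpos hx0 (neg_nonpos.mpr hc.le)),
      hg.map_neg h0J (hIJ hcI) (hIJ hncI), neg_div_neg_eq]
end

section
/- Let J ⊆ (0,∞) be an interval containing 1 as an interior point, and let K : J → ℝ be multiplicative on J (K(xy) = K(x)K(y) whenever x, y, xy ∈ J), not identically zero, and Lebesgue measurable. Then either K ≡ 1 on J, or there exists α ∈ ℝ with K(x) = x^α for all x ∈ J. -/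
/-!
In logarithmic coordinates `k t = K (exp t)` is multiplicative on the convex neighbourhood
`S = exp ⁻¹' J` of `0`. Writing `k t = k (t / 2) ^ 2` shows `k ≥ 0`, and a zero of `k` would
propagate along `t / 2 ^ n → 0` and force `k 0 = 0`; so `k > 0` and `g = log ∘ k` is additive
on `S`. The dyadic limit `lim 2 ^ n g (t / 2 ^ n)` extends `g` to a measurable additive map
`ℝ → ℝ`, which is therefore continuous, hence linear: `g t = α t`, i.e. `K x = x ^ α`.
-/

open Filter Topology

theorem Convex.div_two_pow_mem {S : Set ℝ} (hS : Convex ℝ S) (h0 : (0 : ℝ) ∈ S) {t : ℝ}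
    (ht : t ∈ S) (n : ℕ) : t / 2 ^ n ∈ S := by
  rw [div_eq_inv_mul]
  exact hS.smul_mem_of_zero_mem h0 ht
    ⟨by positivity, inv_le_one_of_one_le₀ (one_le_pow₀ one_le_two)⟩

theorem eventually_div_two_pow_mem {U : Set ℝ} (hU : U ∈ 𝓝 0) (t : ℝ) :
    ∀ᶠ n : ℕ in atTop, t / 2 ^ n ∈ U := by
  have : Tendsto (fun n : ℕ => t / 2 ^ n) atTop (𝓝 0) :=
    tendsto_const_nhds.div_atTop (tendsto_pow_atTop_atTop_of_one_lt one_lt_two)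
  exact this hU

section AdditiveOnConvex

variable {S : Set ℝ} {g : ℝ → ℝ}

theorem apply_eq_two_pow_mul_apply_div_two_pow (hS : Convex ℝ S) (h0 : (0 : ℝ) ∈ S)
    (hadd : ∀ s ∈ S, ∀ t ∈ S, s + t ∈ S → g (s + t) = g s + g t) {t : ℝ} (ht : t ∈ S)
    (n : ℕ) : g t = 2 ^ n * g (t / 2 ^ n) := by
  induction n with
  | zero => simp
  | succ n ih =>
    have hhalf := hS.div_two_pow_mem h0 ht (n + 1)
    have hsum : t / 2 ^ (n + 1) + t / 2 ^ (n + 1) = t / 2 ^ n := by ring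
    have := hadd _ hhalf _ hhalf (hsum ▸ hS.div_two_pow_mem h0 ht n)
    rw [ih, ← hsum, this]
    ring

/-- When `g` is additive near `0`, the sequence `2 ^ n * g (t / 2 ^ n)` is eventually constant,
and its limit is the additive extension of `g` to all of `ℝ`. -/
noncomputable def dyadicExtension (g : ℝ → ℝ) (t : ℝ) : ℝ :=
  limUnder atTop fun n : ℕ => 2 ^ n * g (t / 2 ^ n)

theorem tendsto_two_pow_mul_apply_div_two_pow (hS : Convex ℝ S) (h0 : (0 : ℝ) ∈ S)
    (hadd : ∀ s ∈ S, ∀ t ∈ S, s + t ∈ S → g (s + t) = g s + g t) {t : ℝ} {N : ℕ}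
    (hN : t / 2 ^ N ∈ S) :
    Tendsto (fun n : ℕ => 2 ^ n * g (t / 2 ^ n)) atTop (𝓝 (2 ^ N * g (t / 2 ^ N))) := by
  refine tendsto_const_nhds.congr' ?_
  filter_upwards [eventually_ge_atTop N] with n hn
  obtain ⟨k, rfl⟩ := Nat.exists_eq_add_of_le hn
  rw [apply_eq_two_pow_mul_apply_div_two_pow hS h0 hadd hN k, div_div, ← pow_add]
  ring

theorem dyadicExtension_eq (hS : Convex ℝ S) (h0 : (0 : ℝ) ∈ S)
    (hadd : ∀ s ∈ S, ∀ t ∈ S, s + t ∈ S → g (s + t) = g s + g t) {t : ℝ} {N : ℕ}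
    (hN : t / 2 ^ N ∈ S) : dyadicExtension g t = 2 ^ N * g (t / 2 ^ N) :=
  (tendsto_two_pow_mul_apply_div_two_pow hS h0 hadd hN).limUnder_eq

theorem tendsto_dyadicExtension (hS : Convex ℝ S) (h0 : (0 : ℝ) ∈ interior S)
    (hadd : ∀ s ∈ S, ∀ t ∈ S, s + t ∈ S → g (s + t) = g s + g t) (t : ℝ) :
    Tendsto (fun n : ℕ => 2 ^ n * g (t / 2 ^ n)) atTop (𝓝 (dyadicExtension g t)) := by
  obtain ⟨N, hN⟩ := (eventually_div_two_pow_mem (mem_interior_iff_mem_nhds.1 h0) t).exists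
  rw [dyadicExtension_eq hS (interior_subset h0) hadd hN]
  exact tendsto_two_pow_mul_apply_div_two_pow hS (interior_subset h0) hadd hN

theorem dyadicExtension_eq_of_mem (hS : Convex ℝ S) (h0 : (0 : ℝ) ∈ S)
    (hadd : ∀ s ∈ S, ∀ t ∈ S, s + t ∈ S → g (s + t) = g s + g t) {t : ℝ} (ht : t ∈ S) :
    dyadicExtension g t = g t := by
  simpa using dyadicExtension_eq hS h0 hadd (N := 0) (by simpa using ht)

theorem dyadicExtension_add (hS : Convex ℝ S) (h0 : (0 : ℝ) ∈ interior S)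
    (hadd : ∀ s ∈ S, ∀ t ∈ S, s + t ∈ S → g (s + t) = g s + g t) (s t : ℝ) :
    dyadicExtension g (s + t) = dyadicExtension g s + dyadicExtension g t := by
  have hS0 := mem_interior_iff_mem_nhds.1 h0
  obtain ⟨N, hs, ht, hst⟩ := ((eventually_div_two_pow_mem hS0 s).and
    ((eventually_div_two_pow_mem hS0 t).and (eventually_div_two_pow_mem hS0 (s + t)))).exists
  have h0' := interior_subset h0
  rw [dyadicExtension_eq hS h0' hadd hs, dyadicExtension_eq hS h0' hadd ht,
    dyadicExtension_eq hS h0' hadd hst, add_div, hadd _ hs _ ht (by rwa [← add_div]), mul_add]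

theorem measurable_dyadicExtension (hS : Convex ℝ S) (h0 : (0 : ℝ) ∈ interior S)
    (hadd : ∀ s ∈ S, ∀ t ∈ S, s + t ∈ S → g (s + t) = g s + g t) (hg : Measurable g) :
    Measurable (dyadicExtension g) := by
  refine measurable_of_tendsto_metrizable
    (f := fun (n : ℕ) (t : ℝ) => 2 ^ n * g (t / 2 ^ n))
    (fun n => measurable_const.mul (hg.comp (measurable_id.div_const _))) ?_
  exact tendsto_pi_nhds.2 (tendsto_dyadicExtension hS h0 hadd)

theorem exists_eq_mul_of_measurable_of_add (hS : Convex ℝ S) (h0 : (0 : ℝ) ∈ interior S)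
    (hadd : ∀ s ∈ S, ∀ t ∈ S, s + t ∈ S → g (s + t) = g s + g t) (hg : Measurable g) :
    ∃ α : ℝ, ∀ t ∈ S, g t = α * t := by
  let G : ℝ →+ ℝ := AddMonoidHom.mk' (dyadicExtension g) (dyadicExtension_add hS h0 hadd)
  have hG : Continuous G := MeasureTheory.Measure.AddMonoidHom.continuous_of_measurable G
    (measurable_dyadicExtension hS h0 hadd hg)
  refine ⟨G 1, fun t ht => ?_⟩
  calc g t = G (t • 1) := by
        simpa [G] using (dyadicExtension_eq_of_mem hS (interior_subset h0) hadd ht).symm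
    _ = G 1 * t := by rw [map_real_smul G hG, smul_eq_mul, mul_comm]

end AdditiveOnConvex

section MultiplicativeOnConvex

variable {S : Set ℝ} {k : ℝ → ℝ}

theorem pos_of_add_eq_mul (hS : Convex ℝ S) (h0 : (0 : ℝ) ∈ interior S)
    (hmul : ∀ s ∈ S, ∀ t ∈ S, s + t ∈ S → k (s + t) = k s * k t) (hk : ∃ t ∈ S, k t ≠ 0)
    {t : ℝ} (ht : t ∈ S) : 0 < k t := by
  have h0' := interior_subset h0
  have hk0 : k 0 = 1 := by
    obtain ⟨u, hu, hku⟩ := hk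
    have := hmul u hu 0 h0' (by simpa using hu)
    rw [add_zero] at this
    exact (mul_eq_left₀ hku).1 this.symm
  have hsq : ∀ t ∈ S, k t = k (t / 2) ^ 2 := fun t ht => by
    have hhalf : t / 2 ∈ S := by simpa using hS.div_two_pow_mem h0' ht 1
    rw [sq, ← hmul _ hhalf _ hhalf (by simpa using ht), add_halves]
  have hne : ∀ t ∈ S, k t ≠ 0 := by
    intro t ht hkt
    have hzero : ∀ n : ℕ, k (t / 2 ^ n) = 0 := by
      intro n
      induction n with
      | zero => simpa using hkt
      | succ n ih =>
        rw [hsq _ (hS.div_two_pow_mem h0' ht n), div_div, ← pow_succ] at ih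
        exact pow_eq_zero_iff two_ne_zero |>.1 ih
    -- `k 0 = k (t / 2 ^ n) * k (-t / 2 ^ n)` once `-t / 2 ^ n` is close enough to `0`
    obtain ⟨n, hn⟩ := (eventually_div_two_pow_mem (mem_interior_iff_mem_nhds.1 h0) (-t)).exists
    have := hmul _ (hS.div_two_pow_mem h0' ht n) _ hn (by rwa [neg_div, add_neg_cancel])
    rw [neg_div, add_neg_cancel, hk0, hzero, zero_mul] at this
    exact one_ne_zero this
  rw [hsq t ht]
  exact pow_two_pos_of_ne_zero (hne _ (by simpa using hS.div_two_pow_mem h0' ht 1))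

theorem exists_eq_exp_mul_of_measurable_of_add_eq_mul (hS : Convex ℝ S)
    (h0 : (0 : ℝ) ∈ interior S) (hmul : ∀ s ∈ S, ∀ t ∈ S, s + t ∈ S → k (s + t) = k s * k t)
    (hk : ∃ t ∈ S, k t ≠ 0) (hkm : Measurable k) :
    ∃ α : ℝ, ∀ t ∈ S, k t = Real.exp (α * t) := by
  have hpos : ∀ {t}, t ∈ S → 0 < k t := pos_of_add_eq_mul hS h0 hmul hk
  obtain ⟨α, hα⟩ := exists_eq_mul_of_measurable_of_add (g := fun t => Real.log (k t)) hS h0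
    (fun s hs t ht hst => by
      rw [hmul s hs t ht hst, Real.log_mul (hpos hs).ne' (hpos ht).ne'])
    (Real.measurable_log.comp hkm)
  exact ⟨α, fun t ht => by rw [← hα t ht, Real.exp_log (hpos ht)]⟩

end MultiplicativeOnConvex

theorem multiplicative_measurable_on_positive_interval
    (J : Set ℝ) (hJpos : J ⊆ Set.Ioi (0 : ℝ)) (hJconv : Convex ℝ J)
    (h1J : (1 : ℝ) ∈ interior J)
    (K : ℝ → ℝ)
    (hmult : ∀ x ∈ J, ∀ y ∈ J, x * y ∈ J → K (x * y) = K x * K y)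
    (hnz : ¬ (∀ x ∈ J, K x = 0))
    (hmeas : Measurable (J.restrict K)) :
    (∀ x ∈ J, K x = 1) ∨ ∃ α : ℝ, ∀ x ∈ J, K x = x ^ α := by
  classical
  right
  have hlog : ∀ {x}, x ∈ J → Real.log x ∈ Real.exp ⁻¹' J := fun hx => by
    rwa [Set.mem_preimage, Real.exp_log (hJpos hx)]
  set k := J.piecewise K 1 ∘ Real.exp
  have hk : ∀ {t}, t ∈ Real.exp ⁻¹' J → k t = K (Real.exp t) := fun ht =>
    J.piecewise_eq_of_mem _ _ ht
  have hkm : Measurable k := by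
    refine Measurable.comp ?_ Real.measurable_exp
    refine measurable_of_restrict_of_restrict_compl hJconv.ordConnected.measurableSet ?_ ?_
    · rw [Set.domRestrict_piecewise]; exact hmeas
    · rw [Set.domRestrict_piecewise_compl]; exact measurable_const
  obtain ⟨x, hx, hKx⟩ := not_forall₂.1 hnz
  obtain ⟨α, hα⟩ := exists_eq_exp_mul_of_measurable_of_add_eq_mul
    (hJconv.ordConnected.preimage_mono Real.exp_monotone).convex
    (preimage_interior_subset_interior_preimage Real.continuous_exp (by simpa using h1J))
    (fun s hs t ht hst => by
      rw [hk hst, hk hs, hk ht, Real.exp_add, hmult _ hs _ ht (Real.exp_add s t ▸ hst)])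
    ⟨Real.log x, hlog hx, by rwa [hk (hlog hx), Real.exp_log (hJpos hx)]⟩ hkm
  refine ⟨α, fun x hx => ?_⟩
  rw [Real.rpow_def_of_pos (hJpos hx), mul_comm, ← hα _ (hlog hx), hk (hlog hx),
    Real.exp_log (hJpos hx)]
end

section
/- Let J ⊆ ℝ be an interval containing 1 as an interior point and K : J → ℝ multiplicative on J with K not identically zero. If K(x₀) = 0 for some x₀ ∈ J with x₀ > 0, then K ≡ 0 on J ∩ (0,∞). -/
/-!
Put `yₘ = x₀ ^ (1 / 2 ^ m)`. Each `yₘ` lies between `1` and `x₀`, hence in `J`, and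
`yₘ₊₁ * yₘ₊₁ = yₘ`, so `K yₘ₊₁ ^ 2 = K yₘ` and inductively `K yₘ = 0` for all `m`. Since
`yₘ → 1` and `1` is interior to `J`, eventually `yₘ⁻¹ ∈ J`, whence `K 1 = K yₘ * K yₘ⁻¹ = 0`,
and then `K x = K x * K 1 = 0` for every `x ∈ J`.
-/

open Set Filter Topology

def IsMultiplicativeOn {M N : Type*} [Mul M] [Mul N] (K : M → N) (J : Set M) : Prop :=
  ∀ x ∈ J, ∀ y ∈ J, x * y ∈ J → K (x * y) = K x * K y

namespace IsMultiplicativeOn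

variable {M N : Type*} {K : M → N} {J : Set M}

theorem eq_zero_of_map_one_eq_zero [MulOneClass M] [MulZeroClass N]
    (hK : IsMultiplicativeOn K J) (h1 : (1 : M) ∈ J) (hK1 : K 1 = 0) :
    ∀ x ∈ J, K x = 0 := fun x hx => by
  simpa [hK1] using hK x hx 1 h1 (by simpa using hx)

theorem map_eq_zero_of_map_mul_self_eq_zero [Mul M] [MulZeroClass N] [NoZeroDivisors N]
    (hK : IsMultiplicativeOn K J) {x : M} (hx : x ∈ J) (hxx : x * x ∈ J)
    (hK0 : K (x * x) = 0) : K x = 0 :=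
  mul_self_eq_zero.mp (hK x hx x hx hxx ▸ hK0)

theorem map_one_eq_zero_of_mul_eq_one [MulOneClass M] [MulZeroClass N]
    (hK : IsMultiplicativeOn K J) (h1 : (1 : M) ∈ J) {x y : M} (hx : x ∈ J) (hy : y ∈ J)
    (hxy : x * y = 1) (hK0 : K x = 0) : K 1 = 0 := by
  simpa [hxy, hK0] using hK x hx y hy (hxy ▸ h1)

end IsMultiplicativeOn

theorem Real.rpow_mem_uIcc_one_self {x s : ℝ} (hx : 0 < x) (hs : s ∈ Icc (0 : ℝ) 1) :
    x ^ s ∈ uIcc 1 x := by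
  rw [← uIcc_of_le zero_le_one] at hs
  have hmaps : MapsTo (x ^ · : ℝ → ℝ) (uIcc 0 1) (uIcc (x ^ (0 : ℝ)) (x ^ (1 : ℝ))) := by
    rcases le_total 1 x with h | h
    · exact (Real.monotone_rpow_of_base_ge_one h).mapsTo_uIcc
    · exact (Real.antitone_rpow_of_base_le_one hx h).mapsTo_uIcc
  simpa using hmaps hs

theorem two_inv_pow_mem_Icc (m : ℕ) : (2⁻¹ : ℝ) ^ m ∈ Icc (0 : ℝ) 1 :=
  ⟨by positivity, pow_le_one₀ (by norm_num) (by norm_num)⟩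

theorem Real.rpow_two_inv_pow_mul_self {x : ℝ} (hx : 0 < x) (m : ℕ) :
    x ^ ((2⁻¹ : ℝ) ^ (m + 1)) * x ^ ((2⁻¹ : ℝ) ^ (m + 1)) = x ^ ((2⁻¹ : ℝ) ^ m) := by
  rw [← Real.rpow_add hx]
  ring_nf

theorem Real.tendsto_rpow_two_inv_pow {x : ℝ} (hx : 0 < x) :
    Tendsto (fun m : ℕ => x ^ ((2⁻¹ : ℝ) ^ m)) atTop (𝓝 1) := by
  have hexp : Tendsto (fun m : ℕ => (2⁻¹ : ℝ) ^ m) atTop (𝓝 0) :=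
    tendsto_pow_atTop_nhds_zero_of_lt_one (by norm_num) (by norm_num)
  simpa [Function.comp_def] using (Real.continuousAt_const_rpow hx.ne').tendsto.comp hexp

theorem IsMultiplicativeOn.map_rpow_two_inv_pow_eq_zero {J : Set ℝ} {K : ℝ → ℝ}
    (hK : IsMultiplicativeOn K J) {x : ℝ} (hx : 0 < x) (hpow : ∀ m : ℕ, x ^ ((2⁻¹ : ℝ) ^ m) ∈ J)
    (hK0 : K x = 0) (m : ℕ) : K (x ^ ((2⁻¹ : ℝ) ^ m)) = 0 := by
  induction m with
  | zero => simpa using hK0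
  | succ m ih =>
    refine hK.map_eq_zero_of_map_mul_self_eq_zero (hpow _) ?_ ?_ <;>
      rw [Real.rpow_two_inv_pow_mul_self hx]
    exacts [hpow m, ih]

theorem multiplicative_vanishing_at_positive_point_general
    (J : Set ℝ) (hJconv : Convex ℝ J) (h1J : (1 : ℝ) ∈ interior J)
    (K : ℝ → ℝ)
    (hmult : ∀ x ∈ J, ∀ y ∈ J, x * y ∈ J → K (x * y) = K x * K y)
    (x₀ : ℝ) (hx₀J : x₀ ∈ J) (hx₀pos : 0 < x₀) (hK₀ : K x₀ = 0) :
    ∀ x ∈ J, 0 < x → K x = 0 := by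
  have hK : IsMultiplicativeOn K J := hmult
  have h1 : (1 : ℝ) ∈ J := interior_subset h1J
  have hpow (m : ℕ) : x₀ ^ ((2⁻¹ : ℝ) ^ m) ∈ J :=
    hJconv.ordConnected.uIcc_subset h1 hx₀J (Real.rpow_mem_uIcc_one_self hx₀pos (two_inv_pow_mem_Icc m))
  have hinv : ∀ᶠ m : ℕ in atTop, (x₀ ^ ((2⁻¹ : ℝ) ^ m))⁻¹ ∈ J := by
    refine ((Real.tendsto_rpow_two_inv_pow hx₀pos).inv₀ one_ne_zero).eventually_mem ?_
    simpa using mem_interior_iff_mem_nhds.mp h1J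
  obtain ⟨m, hm⟩ := hinv.exists
  have hK1 : K 1 = 0 :=
    hK.map_one_eq_zero_of_mul_eq_one h1 (hpow m) hm
      (mul_inv_cancel₀ (Real.rpow_pos_of_pos hx₀pos _).ne')
      (hK.map_rpow_two_inv_pow_eq_zero hx₀pos hpow hK₀ m)
  exact fun x hx _ => hK.eq_zero_of_map_one_eq_zero h1 hK1 x hx

theorem multiplicative_vanishing_at_positive_point
    (J : Set ℝ) (hJconv : Convex ℝ J) (h1J : (1 : ℝ) ∈ interior J)
    (K : ℝ → ℝ)
    (hmult : ∀ x ∈ J, ∀ y ∈ J, x * y ∈ J → K (x * y) = K x * K y)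
    (hnz : ¬ (∀ x ∈ J, K x = 0))
    (x₀ : ℝ) (hx₀J : x₀ ∈ J) (hx₀pos : 0 < x₀) (hK₀ : K x₀ = 0) :
    ∀ x ∈ J, 0 < x → K x = 0 :=
  multiplicative_vanishing_at_positive_point_general J hJconv h1J K hmult x₀ hx₀J hx₀pos hK₀
end

section
/- Let n ≥ 3 and J = ℝ. If K : ℝ → ℝ is such that K[A] := (K(a_{ij})) is positive semidefinite of rank at most 1 for every n×n real positive semidefinite matrix A of rank at most 1, and K is not identically zero, then K(1) ≠ 0 and K/K(1) is multiplicative on ℝ: K(xy)K(1) = K(x)K(y) for all x, y ∈ ℝ. -/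
/-!
For `v = (x, y, 1, 0, …, 0)` the matrix `v vᵀ` is positive semidefinite of rank one, so `K[v vᵀ]`
has rank at most one and its `2 × 2` minor on rows `{0, 2}` and columns `{1, 2}` vanishes:
`K(xy) K(1) = K(x) K(y)`. Taking `y = x` gives `K(x)² = K(x²) K(1)`, so `K(1) = 0` would force
`K ≡ 0`.
-/

open Matrix

theorem Matrix.mul_eq_mul_of_rank_le_one {m n R : Type*} [Fintype n] [CommRing R] [IsDomain R]
    {M : Matrix m n R} (hM : M.rank ≤ 1) (i j : m) (k l : n) :
    M i k * M j l = M i l * M j k := by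
  by_contra hne
  have hdet : (M.submatrix ![i, j] ![k, l]).det ≠ 0 := by
    rw [det_fin_two, sub_ne_zero]
    simpa using hne
  have hrank := rank_of_det_mem_nonZeroDivisors (mem_nonZeroDivisors_of_ne_zero hdet)
  have := M.rank_submatrix_le ![i, j] ![k, l]
  simp only [Fintype.card_fin] at hrank
  omega

theorem Matrix.posSemidef_vecMulVec_self {n : Type*} [Finite n] (v : n → ℝ) :
    (vecMulVec v v).PosSemidef := by
  simpa using posSemidef_vecMulVec_self_star v

theorem map_mul_mul_map_one_of_rank_map_vecMulVec_le_one {m : ℕ} {R S : Type*} [CommRing R]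
    [CommRing S] [IsDomain S] {K : R → S}
    (hK : ∀ v : Fin (m + 3) → R, ((vecMulVec v v).map K).rank ≤ 1) (x y : R) :
    K (x * y) * K 1 = K x * K y := by
  set v : Fin (m + 3) → R := Fin.cons x (Fin.cons y (Fin.cons 1 0))
  have hv : v 0 = x ∧ v 1 = y ∧ v 2 = 1 := ⟨rfl, rfl, rfl⟩
  simpa [vecMulVec_apply, hv] using mul_eq_mul_of_rank_le_one (hK v) 0 2 1 2

theorem rank_one_preserver_multiplicative
    (n : ℕ) (hn : 3 ≤ n) (K : ℝ → ℝ)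
    (hK : ∀ A : Matrix (Fin n) (Fin n) ℝ, A.PosSemidef → A.rank ≤ 1 →
      (A.map K).PosSemidef ∧ (A.map K).rank ≤ 1)
    (hnz : ¬ (∀ x : ℝ, K x = 0)) :
    K 1 ≠ 0 ∧ ∀ x y : ℝ, K (x * y) * K 1 = K x * K y := by
  obtain ⟨m, rfl⟩ := Nat.exists_eq_add_of_le' hn
  have hmul : ∀ x y : ℝ, K (x * y) * K 1 = K x * K y :=
    map_mul_mul_map_one_of_rank_map_vecMulVec_le_one fun v =>
      (hK _ (posSemidef_vecMulVec_self v) (rank_vecMulVec_le v v)).2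
  refine ⟨fun hK1 => hnz fun x => ?_, hmul⟩
  have hsq := hmul x x
  rw [hK1, mul_zero] at hsq
  exact mul_self_eq_zero.mp hsq.symm
end

section
/- Let n ≥ 3, let J ⊆ ℝ be an interval with 1 an interior point, J ∩ (0,∞) open, and ±sup J ∉ J, and let K : J → ℝ map every matrix in ℙₙ¹(J) entrywise into ℙₙ¹(ℝ). If K(1) = 0, then K ≡ 0 on J. -/
/-!
Applying `K` to the rank-one matrix `v vᵀ` with `v = (p/√u, √u, …, √u)` gives a positive
semidefinite matrix whose `2 × 2` minor is `[[K w, K p], [K p, K u]]` with `w = p²/u`; hence a zero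
of `K` at `u > 0` forces a zero at `p` whenever `p, p²/u ∈ J`. On `(0, ∞)` the zero at `1` spreads
along a geometric progression `1, c, …, c^N = x`, whose next term `c^(N+1)` still lies in `J` because
`J ∩ (0, ∞)` is open. A point `x ∈ [-1, 0]` is reached from `u = 1`, and a point `x < -1` from
`u = -x`, which lies in `J` because `-sup J ∉ J`.
-/

open Set Filter Topology

theorem Matrix.PosSemidef.apply_eq_zero_of_apply_self_eq_zero {ι : Type*} [Fintype ι]
    {M : Matrix ι ι ℝ} (hM : M.PosSemidef) {i : ι} (j : ι) (hii : M i i = 0) : M i j = 0 := by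
  have hdet := (hM.submatrix ![i, j]).det_nonneg
  have hsymm : M j i = M i j := hM.isHermitian.apply i j
  simp only [Matrix.det_fin_two, Matrix.submatrix_apply, Matrix.cons_val_zero,
    Matrix.cons_val_one, hii, hsymm, zero_mul, zero_sub, Left.nonneg_neg_iff] at hdet
  exact mul_self_eq_zero.mp (le_antisymm hdet (mul_self_nonneg _))

def PropagatesZeros (J : Set ℝ) (K : ℝ → ℝ) : Prop :=
  ∀ ⦃u p w : ℝ⦄, u ∈ J → p ∈ J → w ∈ J → 0 < u → p ^ 2 = u * w → K u = 0 → K p = 0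

theorem propagatesZeros_of_map_posSemidef {ι : Type*} [Fintype ι] {i j : ι} (hij : i ≠ j)
    {J : Set ℝ} {K : ℝ → ℝ}
    (hK : ∀ A : Matrix ι ι ℝ, A.PosSemidef → A.rank ≤ 1 → (∀ a b, A a b ∈ J) →
      (A.map K).PosSemidef) :
    PropagatesZeros J K := by
  classical
  intro u p w hu hp hw hu0 hpuw hKu
  set s := √u
  have hs : s ≠ 0 := (Real.sqrt_pos.mpr hu0).ne'
  have hss : s * s = u := Real.mul_self_sqrt hu0.le
  set v : ι → ℝ := Function.update (fun _ => s) i (p / s)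
  have hvi : v i = p / s := Function.update_self ..
  have hv : ∀ a ≠ i, v a = s := fun a ha => Function.update_of_ne ha ..
  have hentries : ∀ a b, Matrix.vecMulVec v v a b ∈ J := by
    have hpp : p / s * (p / s) = w := by
      rw [div_mul_div_comm, hss, ← sq, hpuw, mul_div_cancel_left₀ w hu0.ne']
    intro a b
    rw [Matrix.vecMulVec_apply]
    by_cases ha : a = i <;> by_cases hb : b = i
    · rwa [ha, hb, hvi, hpp]
    · rwa [ha, hvi, hv b hb, div_mul_cancel₀ p hs]
    · rwa [hb, hv a ha, hvi, mul_div_cancel₀ p hs]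
    · rwa [hv a ha, hv b hb, hss]
  have hpsd := hK _ (by simpa using Matrix.posSemidef_vecMulVec_self_star v)
    ((Matrix.rank_vecMulVec_le v v).trans (by simp)) hentries
  have hzero := hpsd.apply_eq_zero_of_apply_self_eq_zero (i := j) i
    (by rwa [Matrix.map_apply, Matrix.vecMulVec_apply, hv j hij.symm, hss])
  rwa [Matrix.map_apply, Matrix.vecMulVec_apply, hv j hij.symm, hvi, mul_div_cancel₀ p hs] at hzero

theorem Real.rpow_mem_of_ordConnected {J : Set ℝ} (hJ : J.OrdConnected) (h1 : 1 ∈ J) {x t : ℝ}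
    (hx : x ∈ J) (hx0 : 0 < x) (ht : t ∈ Icc (0 : ℝ) 1) : x ^ t ∈ J := by
  rcases le_total 1 x with hx1 | hx1
  · refine hJ.out h1 hx ⟨?_, ?_⟩
    · simpa using Real.rpow_le_rpow_of_exponent_le hx1 ht.1
    · simpa using Real.rpow_le_rpow_of_exponent_le hx1 ht.2
  · refine hJ.out hx h1 ⟨?_, ?_⟩
    · simpa using Real.rpow_le_rpow_of_exponent_ge hx0 hx1 ht.2
    · simpa using Real.rpow_le_rpow_of_exponent_ge hx0 hx1 ht.1

theorem exists_rpow_one_add_inv_mem {J : Set ℝ} (hJ : IsOpen (J ∩ Ioi 0)) {x : ℝ} (hx : x ∈ J)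
    (hx0 : 0 < x) : ∃ N : ℕ, x ^ (1 + 1 / ((N : ℝ) + 1)) ∈ J := by
  have hlim : Tendsto (fun N : ℕ => x ^ (1 + 1 / ((N : ℝ) + 1))) atTop (𝓝 x) := by
    have hexp : Tendsto (fun N : ℕ => 1 + 1 / ((N : ℝ) + 1)) atTop (𝓝 1) := by
      simpa using tendsto_one_div_add_atTop_nhds_zero_nat.const_add (1 : ℝ)
    simpa [Function.comp_def] using (Real.continuousAt_const_rpow hx0.ne').tendsto.comp hexp
  exact (hlim.eventually_mem (hJ.mem_nhds ⟨hx, hx0⟩)).exists.imp fun _ h => h.1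

namespace PropagatesZeros

variable {J : Set ℝ} {K : ℝ → ℝ}

theorem pow_eq_zero (hK : PropagatesZeros J K) (hK1 : K 1 = 0) {c : ℝ} (hc : 0 < c) {N : ℕ}
    (hJ : ∀ m ≤ N + 1, c ^ m ∈ J) : ∀ m ≤ N, K (c ^ m) = 0
  | 0, _ => by simpa using hK1
  | m + 1, hm => hK (hJ m (by omega)) (hJ (m + 1) (by omega)) (hJ (m + 2) (by omega))
      (pow_pos hc m) (by ring) (pow_eq_zero hK hK1 hc hJ m (by omega))

theorem eq_zero_of_pos (hK : PropagatesZeros J K) (hK1 : K 1 = 0) (hJ : J.OrdConnected)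
    (h1 : 1 ∈ J) (hJopen : IsOpen (J ∩ Ioi 0)) {x : ℝ} (hx : x ∈ J) (hx0 : 0 < x) : K x = 0 := by
  obtain ⟨N, hN⟩ := exists_rpow_one_add_inv_mem hJopen hx hx0
  set c := x ^ (1 / ((N : ℝ) + 1))
  have hpow : ∀ m : ℕ, c ^ m = x ^ ((m : ℝ) / (N + 1)) := fun m => by
    rw [← Real.rpow_natCast, ← Real.rpow_mul hx0.le, one_div_mul_eq_div]
  have hmem : ∀ m ≤ N + 2, c ^ m ∈ J := by
    intro m hm
    rcases Nat.lt_or_ge m (N + 2) with hm' | hm'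
    · refine hpow m ▸ Real.rpow_mem_of_ordConnected hJ h1 hx hx0 ⟨by positivity, ?_⟩
      rw [div_le_one (by positivity)]
      exact_mod_cast Nat.lt_succ_iff.mp hm'
    · convert hN using 1
      rw [hpow, show m = N + 2 by omega, one_add_div (by positivity)]
      push_cast
      ring_nf
  have := hK.pow_eq_zero hK1 (Real.rpow_pos_of_pos hx0 _) hmem (N + 1) le_rfl
  rwa [hpow, Nat.cast_add_one, div_self (by positivity), Real.rpow_one] at this

end PropagatesZeros

theorem neg_mem_of_le_neg_one {J : Set ℝ} (hJ : J.OrdConnected) (h1 : 1 ∈ J) (hsup : -sSup J ∉ J)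
    {x : ℝ} (hx : x ∈ J) (hx1 : x ≤ -1) : -x ∈ J := by
  have h0 : 0 ∈ J := hJ.out hx h1 ⟨by linarith, zero_le_one⟩
  -- for unbounded `J` the junk value `sSup J = 0` would contradict `0 ∈ J`
  have hbdd : BddAbove J := by
    by_contra hb
    rw [Real.sSup_of_not_bddAbove hb, neg_zero] at hsup
    exact hsup h0
  have hsup1 : 1 ≤ sSup J := le_csSup hbdd h1
  have hxsup : -x < sSup J := by
    by_contra! hle
    exact hsup (hJ.out hx h1 ⟨by linarith, by linarith⟩)
  obtain ⟨z, hz, hxz⟩ := exists_lt_of_lt_csSup ⟨1, h1⟩ hxsup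
  exact hJ.out h1 hz ⟨by linarith, hxz.le⟩

theorem rank_one_preserver_vanishing_at_one
    (n : ℕ) (hn : 3 ≤ n)
    (J : Set ℝ) (hJconv : Convex ℝ J) (h1J : (1 : ℝ) ∈ interior J)
    (hJopen : IsOpen (J ∩ Set.Ioi (0 : ℝ)))
    (hsup : sSup J ∉ J ∧ -sSup J ∉ J)
    (K : ℝ → ℝ)
    (hK : ∀ A : Matrix (Fin n) (Fin n) ℝ, A.PosSemidef → A.rank ≤ 1 →
      (∀ i j, A i j ∈ J) → (A.map K).PosSemidef ∧ (A.map K).rank ≤ 1)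
    (hK1 : K 1 = 0) :
    ∀ x ∈ J, K x = 0 := by
  have hJ := hJconv.ordConnected
  have h1 : (1 : ℝ) ∈ J := interior_subset h1J
  have hprop : PropagatesZeros J K :=
    propagatesZeros_of_map_posSemidef (i := ⟨0, by omega⟩) (j := ⟨1, by omega⟩)
      (by simp [Fin.ext_iff]) fun A hA hrank hJA => (hK A hA hrank hJA).1
  have hpos : ∀ x ∈ J, 0 < x → K x = 0 := fun x hx hx0 =>
    hprop.eq_zero_of_pos hK1 hJ h1 hJopen hx hx0
  intro x hx
  rcases lt_or_ge 0 x with hx0 | hx0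
  · exact hpos x hx hx0
  rcases le_total (-1) x with hx1 | hx1
  · have hx2 : x ^ 2 ∈ J := hJ.out (hJ.out hx h1 ⟨hx0, zero_le_one⟩) h1 ⟨sq_nonneg x, by nlinarith⟩
    exact hprop h1 hx hx2 one_pos (one_mul _).symm hK1
  · have hmx := neg_mem_of_le_neg_one hJ h1 hsup.2 hx hx1
    exact hprop hmx hx hmx (by linarith) (by ring) (hpos _ hmx (by linarith))
end

section
/- Let n ≥ 3 and suppose K : ℝ → ℝ is Lebesgue measurable on some interval containing 1 as an interior point, K(1) ≠ 0, and K maps ℙₙ¹(ℝ) entrywise into ℙₙ¹(ℝ). Then either K is a positive constant, or there exist c > 0 and α ∈ ℝ such that K(x) = c|x|^α for all x, or K(x) = c·sgn(x)|x|^α for all x (with K(0) = 0). -/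
/-!
The vanishing 2×2 minors of `K[u uᵀ]` for `u = (x, y, 1, …)` give the functional equation
`K(xy) K(1) = K(x) K(y)`, and `K(1) ≥ 0` is a diagonal entry of `K[𝟙 𝟙ᵀ]`. If `K(0) ≠ 0`, taking
`x = 0` shows that `K` is constant. Otherwise `f = K / K(1)` is multiplicative with `f(0) = 0`, hence
positive on `(0, ∞)`, and `t ↦ log f(eᵗ)` is additive and measurable near `0`. Being measurable,
it is bounded on a set of positive measure, so by Steinhaus' theorem it is bounded near `0`,
hence continuous and linear: `f(x) = x^α` for `x > 0`. Finally `f(-1)² = 1`, and the sign of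
`f(-1)` decides between `φ_α` and `ψ_α`.
-/

noncomputable def phi (α : ℝ) (x : ℝ) : ℝ := if x = 0 then 0 else |x| ^ α

noncomputable def psi (α : ℝ) (x : ℝ) : ℝ :=
  if x = 0 then 0 else Real.sign x * |x| ^ α

open MeasureTheory Set Bornology Topology

theorem AddMonoidHom.continuous_of_isBounded_image_of_measure_pos {G H : Type*}
    [SeminormedAddCommGroup G] [MeasurableSpace G] [BorelSpace G] [LocallyCompactSpace G]
    [SeminormedAddCommGroup H] [NormedSpace ℝ H]
    (μ : Measure G) [μ.IsAddHaarMeasure] [μ.InnerRegular]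
    (g : G →+ H) {S : Set G} (hS : MeasurableSet S) (hμS : 0 < μ S)
    (hbdd : IsBounded (g '' S)) : Continuous g :=
  g.continuous_of_isBounded_nhds_zero (Measure.sub_mem_nhds_zero_of_addHaar_pos μ S hS hμS)
    (by rw [image_sub]; exact hbdd.sub hbdd)

theorem exists_measure_pos_isBounded_image {α β : Type*} [TopologicalSpace α]
    [MeasurableSpace α] [OpensMeasurableSpace α] (μ : Measure α) [μ.IsOpenPosMeasure]
    [PseudoMetricSpace β] [MeasurableSpace β] [OpensMeasurableSpace β]
    {f : α → β} {s : Set α} {x : α} (hs : s ∈ 𝓝 x) (hf : Measurable (s.domRestrict f)) :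
    ∃ T, MeasurableSet T ∧ 0 < μ T ∧ IsBounded (f '' T) := by
  set U := interior s
  have hfU : Measurable (U.domRestrict f) := hf.comp (measurable_inclusion interior_subset)
  set T : ℕ → Set α := fun m => Subtype.val '' (U.domRestrict f ⁻¹' Metric.ball (f x) m)
  have hT : ∀ m, MeasurableSet (T m) := fun m =>
    isOpen_interior.measurableSet.subtype_image (hfU Metric.isOpen_ball.measurableSet)
  have hcover : ⋃ m, T m = U := by
    ext y
    simp only [T, mem_iUnion, mem_image, mem_preimage, Metric.mem_ball, Subtype.exists,
      exists_and_right, exists_eq_right, domRestrict_apply]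
    exact ⟨fun ⟨_, hy, _⟩ => hy, fun hy => ⟨_, hy, exists_nat_gt _ |>.choose_spec⟩⟩
  obtain ⟨m, hm⟩ : ∃ m, 0 < μ (T m) := by
    by_contra! h
    have hU : μ U = 0 := by
      rw [← hcover]; exact measure_iUnion_null fun m => le_antisymm (h m) bot_le
    exact (isOpen_interior.measure_pos μ ⟨x, mem_interior_iff_mem_nhds.mpr hs⟩).ne' hU
  refine ⟨T m, hT m, hm, (Metric.isBounded_ball (x := f x) (r := m)).subset ?_⟩
  rintro _ ⟨_, ⟨y, hy, rfl⟩, rfl⟩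
  exact hy

theorem AddMonoidHom.continuous_of_measurable_domRestrict {G H : Type*}
    [SeminormedAddCommGroup G] [MeasurableSpace G] [BorelSpace G] [LocallyCompactSpace G]
    [SeminormedAddCommGroup H] [NormedSpace ℝ H] [MeasurableSpace H] [OpensMeasurableSpace H]
    (μ : Measure G) [μ.IsAddHaarMeasure] [μ.InnerRegular]
    (g : G →+ H) {s : Set G} {x : G} (hs : s ∈ 𝓝 x) (hg : Measurable (s.domRestrict g)) :
    Continuous g :=
  let ⟨_, hT, hμT, hbdd⟩ := exists_measure_pos_isBounded_image μ hs hg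
  g.continuous_of_isBounded_image_of_measure_pos μ hT hμT hbdd

namespace MonoidWithZeroHom

variable (f : ℝ →*₀ ℝ)

theorem pos_of_pos {x : ℝ} (hx : 0 < x) : 0 < f x := by
  have hsq : f x = f √x * f √x := by rw [← map_mul, Real.mul_self_sqrt hx.le]
  exact (hsq ▸ mul_self_nonneg _).lt_of_ne' ((map_ne_zero f).mpr hx.ne')

noncomputable def logCompExp : ℝ →+ ℝ where
  toFun t := Real.log (f (Real.exp t))
  map_zero' := by simp
  map_add' s t := by
    rw [Real.exp_add, map_mul, Real.log_mul (f.pos_of_pos (Real.exp_pos s)).ne'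
      (f.pos_of_pos (Real.exp_pos t)).ne']

@[simp]
theorem logCompExp_apply (t : ℝ) : f.logCompExp t = Real.log (f (Real.exp t)) :=
  rfl

theorem continuous_logCompExp {s : Set ℝ} (hs : s ∈ 𝓝 1) (hf : Measurable (s.domRestrict f)) :
    Continuous f.logCompExp := by
  have hs' : Real.exp ⁻¹' s ∈ 𝓝 0 :=
    Real.continuous_exp.continuousAt.preimage_mem_nhds (by rwa [Real.exp_zero])
  exact f.logCompExp.continuous_of_measurable_domRestrict volume hs'
    (Real.measurable_log.comp (hf.comp (Real.measurable_exp.subtype_map fun _ h => h)))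

theorem apply_eq_rpow (hg : Continuous f.logCompExp) {x : ℝ} (hx : 0 < x) :
    f x = x ^ f.logCompExp 1 := by
  have hlin : f.logCompExp (Real.log x) = Real.log x * f.logCompExp 1 := by
    simpa only [smul_eq_mul, mul_one] using map_real_smul f.logCompExp hg (Real.log x) 1
  rw [Real.rpow_def_of_pos hx, ← hlin, logCompExp_apply, Real.exp_log hx,
    Real.exp_log (f.pos_of_pos hx)]

theorem apply_neg_one_eq_one_or : f (-1) = 1 ∨ f (-1) = -1 :=
  mul_self_eq_one_iff.mp (by rw [← map_mul, neg_one_mul, neg_neg, map_one])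

theorem eq_phi_or_eq_psi {α : ℝ} (h : ∀ x, 0 < x → f x = x ^ α) :
    (∀ x, f x = phi α x) ∨ ∀ x, f x = psi α x := by
  have hneg : ∀ x < 0, f x = f (-1) * (-x) ^ α := fun x hx => by
    rw [← h (-x) (by linarith), ← map_mul, neg_one_mul, neg_neg]
  rcases f.apply_neg_one_eq_one_or with h1 | h1
  · left
    intro x
    rcases lt_trichotomy x 0 with hx | rfl | hx
    · simp [phi, hx.ne, abs_of_neg hx, hneg x hx, h1]
    · simp [phi]
    · simp [phi, hx.ne', abs_of_pos hx, h x hx]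
  · right
    intro x
    rcases lt_trichotomy x 0 with hx | rfl | hx
    · simp [psi, hx.ne, abs_of_neg hx, hneg x hx, h1, Real.sign_of_neg hx]
    · simp [psi]
    · simp [psi, hx.ne', abs_of_pos hx, h x hx, Real.sign_of_pos hx]

theorem exists_eq_phi_or_eq_psi {s : Set ℝ} (hs : s ∈ 𝓝 1) (hf : Measurable (s.domRestrict f)) :
    ∃ α, (∀ x, f x = phi α x) ∨ ∀ x, f x = psi α x :=
  ⟨_, f.eq_phi_or_eq_psi fun _ hx => f.apply_eq_rpow (f.continuous_logCompExp hs hf) hx⟩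

end MonoidWithZeroHom

namespace Matrix

theorem mul_eq_mul_of_rank_le_one_s11 {R m n : Type*} [Field R] [Fintype n]
    {M : Matrix m n R} (hM : M.rank ≤ 1) (i j : m) (k l : n) :
    M i k * M j l = M i l * M j k := by
  classical
  obtain ⟨v, hv⟩ := finrank_le_one_iff.mp hM
  have hcol : ∀ k, ∃ c : R, ∀ i, M i k = c * v.1 i := fun k => by
    obtain ⟨c, hc⟩ := hv ⟨M.col k, Pi.single k 1, M.mulVec_single_one k⟩
    exact ⟨c, fun i => (congrFun (congrArg Subtype.val hc) i).symm⟩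
  obtain ⟨a, ha⟩ := hcol k
  obtain ⟨b, hb⟩ := hcol l
  rw [ha, ha, hb, hb]
  ring

end Matrix

open Matrix

theorem apply_mul_mul_apply_one_of_rank_le_one {R ι : Type*} [Field R] [Fintype ι] {K : R → R}
    (hK : ∀ u : ι → R, ((vecMulVec u u).map K).rank ≤ 1) {i j k : ι} (hij : i ≠ j)
    (hik : i ≠ k) (hjk : j ≠ k) (x y : R) :
    K (x * y) * K 1 = K x * K y := by
  classical
  let u : ι → R := fun l => if l = i then x else if l = j then y else 1
  simpa [u, vecMulVec_apply, hij.symm, hik.symm, hjk.symm] using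
    mul_eq_mul_of_rank_le_one_s11 (hK u) i k j k

def MonoidWithZeroHom.normalize {R : Type*} [Field R] (K : R → R) (h0 : K 0 = 0) (h1 : K 1 ≠ 0)
    (hK : ∀ x y, K (x * y) * K 1 = K x * K y) : R →*₀ R where
  toFun x := K x / K 1
  map_zero' := by simp [h0]
  map_one' := div_self h1
  map_mul' x y := by
    field_simp
    exact hK x y

theorem rank_one_preserver_classification_general
    (n : ℕ) (hn : 3 ≤ n)
    (I : Set ℝ) (h1I : (1 : ℝ) ∈ interior I)
    (K : ℝ → ℝ)
    (hmeas : Measurable (I.restrict K))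
    (hK1 : K 1 ≠ 0)
    (hK : ∀ A : Matrix (Fin n) (Fin n) ℝ, A.PosSemidef → A.rank ≤ 1 →
      (A.map K).PosSemidef ∧ (A.map K).rank ≤ 1) :
    (∃ c : ℝ, 0 < c ∧ ∀ x : ℝ, K x = c) ∨
      ∃ c : ℝ, 0 < c ∧ ∃ α : ℝ,
        (∀ x : ℝ, K x = c * phi α x) ∨ (∀ x : ℝ, K x = c * psi α x) := by
  have hKu (u : Fin n → ℝ) := hK _ (by simpa using posSemidef_vecMulVec_self_star u)
    (rank_vecMulVec_le u u)
  have hK1pos : 0 < K 1 := by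
    refine lt_of_le_of_ne ?_ hK1.symm
    simpa [vecMulVec_apply] using (hKu 1).1.diag_nonneg (i := ⟨0, by omega⟩)
  have hfun := apply_mul_mul_apply_one_of_rank_le_one (fun u => (hKu u).2)
    (i := ⟨0, by omega⟩) (j := ⟨1, by omega⟩) (k := ⟨2, by omega⟩) (by simp) (by simp) (by simp)
  by_cases h0 : K 0 = 0
  · obtain ⟨α, hα⟩ := (MonoidWithZeroHom.normalize K h0 hK1 hfun).exists_eq_phi_or_eq_psi
      (mem_interior_iff_mem_nhds.mp h1I) (hmeas.div_const (K 1))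
    have hK_eq (x : ℝ) : K x = K 1 * MonoidWithZeroHom.normalize K h0 hK1 hfun x := by
      simp [MonoidWithZeroHom.normalize, mul_div_cancel₀ _ hK1]
    exact Or.inr ⟨K 1, hK1pos, α, hα.imp (fun h x => by rw [hK_eq, h]) fun h x => by rw [hK_eq, h]⟩
  · exact Or.inl ⟨K 1, hK1pos, fun x =>
    (mul_left_cancel₀ h0 (by simpa using hfun 0 x) : K 1 = K x).symm⟩

theorem rank_one_preserver_classification
    (n : ℕ) (hn : 3 ≤ n)
    (I : Set ℝ) (hIconv : Convex ℝ I) (h1I : (1 : ℝ) ∈ interior I)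
    (K : ℝ → ℝ)
    (hmeas : Measurable (I.restrict K))
    (hK1 : K 1 ≠ 0)
    (hK : ∀ A : Matrix (Fin n) (Fin n) ℝ, A.PosSemidef → A.rank ≤ 1 →
      (A.map K).PosSemidef ∧ (A.map K).rank ≤ 1) :
    (∃ c : ℝ, 0 < c ∧ ∀ x : ℝ, K x = c) ∨
      ∃ c : ℝ, 0 < c ∧ ∃ α : ℝ,
        (∀ x : ℝ, K x = c * phi α x) ∨ (∀ x : ℝ, K x = c * psi α x) :=
  rank_one_preserver_classification_general n hn I h1I K hmeas hK1 hK
end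

section
/- If K : ℝ → ℝ is such that K[A] is positive semidefinite of rank at most 1 for every 2×2 real positive semidefinite rank-at-most-1 matrix A, K is Lebesgue measurable on a neighborhood of 1, and K is not identically zero, then the restriction of K to [0,∞) is either a positive constant, or a positive multiple of x ↦ x^α (with K(0) = 0) for some α ∈ ℝ. -/
/-!
Applying `K` entrywise to the rank-one matrix `v vᵀ` with `v = (s, t)` and using that the result
is again positive semidefinite of rank at most one gives `K (s²) ≥ 0` and the determinant identity
`K (s²) K (t²) = K (st)²`. With `t = 0` this forces `K` to be the constant `K 0` on `[0, ∞)` unless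
`K 0 = 0`. Otherwise `K` has no zero on `(0, ∞)` (a zero would propagate to all of `ℝ`) and
`K (xy) K 1 = K x K y` there, so `t ↦ log K (eᵗ) - log K 1` is additive; being measurable near `0`,
it is linear, which makes `K` a positive multiple of a power.
-/

open Filter Topology Matrix

theorem Matrix.det_eq_zero_of_rank_lt_card {n R : Type*} [Fintype n] [DecidableEq n] [Field R]
    {A : Matrix n n R} (h : A.rank < Fintype.card n) : A.det = 0 := by
  by_contra hA
  exact h.ne (rank_of_det_ne_zero hA)

theorem Measurable.exists_measurable_eventuallyEq_of_domRestrict {α β : Type*}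
    [TopologicalSpace α] [MeasurableSpace α] [OpensMeasurableSpace α] [MeasurableSpace β]
    {f : α → β} {U : Set α} {x : α} (hU : U ∈ 𝓝 x) (hf : Measurable (U.domRestrict f)) :
    ∃ g : α → β, Measurable g ∧ f =ᶠ[𝓝 x] g := by
  classical
  obtain ⟨V, hVU, hV, hxV⟩ := mem_nhds_iff.1 hU
  refine ⟨fun y => if hy : y ∈ V then f y else f x, ?_, ?_⟩
  · exact Measurable.dite (hf.comp (measurable_inclusion hVU)) measurable_const hV.measurableSet
  · filter_upwards [hV.mem_nhds hxV] with y hy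
    simp [hy]

theorem AddMonoidHom.measurable_of_eventuallyEq {E F : Type*} [NormedAddCommGroup E]
    [NormedSpace ℝ E] [MeasurableSpace E] [BorelSpace E] [NormedAddCommGroup F] [NormedSpace ℝ F]
    [MeasurableSpace F] [BorelSpace F] (f : E →+ F) {g : E → F} (hg : Measurable g)
    (hfg : f =ᶠ[𝓝 0] g) : Measurable f := by
  classical
  obtain ⟨ε, hε, hfg⟩ := Metric.eventually_nhds_iff.1 hfg
  -- on each ball of radius `(n + 1) ε`, `f` is a rescaled copy of `g`; these balls cover `E`
  have hscale : ∀ (n : ℕ) (x : E), ‖x‖ < (n + 1) * ε →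
      f x = ((n : ℝ) + 1) • g (((n : ℝ) + 1)⁻¹ • x) := by
    intro n x hx
    have hn : (0 : ℝ) < n + 1 := n.cast_add_one_pos
    rw [← hfg, ← Nat.cast_add_one, Nat.cast_smul_eq_nsmul, ← map_nsmul, ← Nat.cast_smul_eq_nsmul ℝ,
      Nat.cast_add_one, smul_inv_smul₀ hn.ne']
    rw [dist_zero_right, norm_smul, norm_inv, Real.norm_of_nonneg hn.le]
    exact (inv_mul_lt_iff₀ hn).2 hx
  have hcover : ∀ x : E, ∃ n : ℕ, ‖x‖ < (n + 1) * ε := fun x => by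
    obtain ⟨n, hn⟩ := exists_nat_gt (‖x‖ / ε)
    exact ⟨n, (div_lt_iff₀ hε).1 (hn.trans (lt_add_one _))⟩
  have : ⇑f = fun x => ((Nat.find (hcover x) : ℝ) + 1) •
      g (((Nat.find (hcover x) : ℝ) + 1)⁻¹ • x) :=
    funext fun x => hscale _ x (Nat.find_spec (hcover x))
  rw [this]
  exact Measurable.find
    (fun n => (hg.comp (measurable_const_smul ((n + 1 : ℝ)⁻¹))).const_smul ((n : ℝ) + 1))
    (fun n => measurableSet_lt measurable_norm measurable_const) hcover

open MeasureTheory.Measure in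
theorem AddMonoidHom.apply_eq_mul_apply_one_of_eventuallyEq (f : ℝ →+ ℝ) {g : ℝ → ℝ}
    (hg : Measurable g) (hfg : f =ᶠ[𝓝 0] g) (t : ℝ) : f t = t * f 1 := by
  simpa using map_real_smul f (f.continuous_of_measurable (f.measurable_of_eventuallyEq hg hfg)) t 1

open Real in
theorem exists_eq_mul_rpow_of_map_mul {K G : ℝ → ℝ} (hpos : ∀ x, 0 < x → 0 < K x)
    (hmul : ∀ x y, 0 < x → 0 < y → K (x * y) * K 1 = K x * K y) (hG : Measurable G)
    (hKG : K =ᶠ[𝓝 1] G) : ∃ α : ℝ, ∀ x, 0 < x → K x = K 1 * x ^ α := by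
  have hK1 := hpos 1 one_pos
  let L : ℝ →+ ℝ := AddMonoidHom.mk' (fun t => log (K (exp t)) - log (K 1)) fun a b => by
    have := congrArg log (hmul (exp a) (exp b) (exp_pos a) (exp_pos b))
    rw [← exp_add, log_mul (hpos _ (exp_pos _)).ne' hK1.ne',
      log_mul (hpos _ (exp_pos _)).ne' (hpos _ (exp_pos _)).ne'] at this
    linarith
  have hexp : Tendsto exp (𝓝 0) (𝓝 1) := by simpa using continuous_exp.tendsto 0
  have hLG : L =ᶠ[𝓝 0] fun t => log (G (exp t)) - log (K 1) :=
    ((hKG.comp_tendsto hexp).fun_comp log).fun_comp (· - log (K 1))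
  refine ⟨L 1, fun x hx => ?_⟩
  have hLx : L (log x) = log (K x) - log (K 1) := by simp [L, exp_log hx]
  rw [L.apply_eq_mul_apply_one_of_eventuallyEq
    ((measurable_log.comp (hG.comp measurable_exp)).sub_const _) hLG] at hLx
  calc K x = exp (log (K 1) + log x * L 1) := by rw [hLx, add_sub_cancel, exp_log (hpos x hx)]
    _ = K 1 * x ^ L 1 := by rw [exp_add, exp_log hK1, rpow_def_of_pos hx]

def PreservesRankOnePSD (K : ℝ → ℝ) : Prop :=
  ∀ A : Matrix (Fin 2) (Fin 2) ℝ, A.PosSemidef → A.rank ≤ 1 →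
    (A.map K).PosSemidef ∧ (A.map K).rank ≤ 1

namespace PreservesRankOnePSD

open Real

variable {K : ℝ → ℝ}

theorem map_vecMulVec_self (hK : PreservesRankOnePSD K) (v : Fin 2 → ℝ) :
    ((vecMulVec v v).map K).PosSemidef ∧ ((vecMulVec v v).map K).rank ≤ 1 :=
  hK _ (by simpa using posSemidef_vecMulVec_self_star v) (rank_vecMulVec_le v v)

theorem apply_mul_self_mul_apply_mul_self (hK : PreservesRankOnePSD K) (s t : ℝ) :
    K (s * s) * K (t * t) = K (s * t) * K (s * t) := by
  have hdet := det_eq_zero_of_rank_lt_card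
    (((hK.map_vecMulVec_self ![s, t]).2).trans_lt (by simp : 1 < Fintype.card (Fin 2)))
  simp [det_fin_two, mul_comm t s] at hdet
  linarith

theorem nonneg (hK : PreservesRankOnePSD K) {x : ℝ} (hx : 0 ≤ x) : 0 ≤ K x := by
  simpa [vecMulVec_apply, hx] using (hK.map_vecMulVec_self ![√x, 0]).1.diag_nonneg (i := 0)

theorem eq_zero_of_apply_eq_zero (hK : PreservesRankOnePSD K) {x : ℝ} (hx : 0 < x)
    (h : K x = 0) (u : ℝ) : K u = 0 := by
  have := hK.apply_mul_self_mul_apply_mul_self √x (u / √x)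
  rwa [mul_self_sqrt hx.le, h, zero_mul, mul_div_cancel₀ _ (sqrt_pos.2 hx).ne', eq_comm,
    mul_self_eq_zero] at this

theorem apply_mul_mul_apply_one (hK : PreservesRankOnePSD K) {x y : ℝ} (hx : 0 ≤ x)
    (hy : 0 ≤ y) :
    K (x * y) * K 1 = K x * K y := by
  have hxy := hK.apply_mul_self_mul_apply_mul_self √x √y
  have h1 := hK.apply_mul_self_mul_apply_mul_self √(x * y) 1
  rw [mul_self_sqrt hx, mul_self_sqrt hy, ← sqrt_mul hx] at hxy
  rw [mul_self_sqrt (mul_nonneg hx hy), one_mul, mul_one] at h1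
  rw [h1, hxy]

theorem apply_eq_apply_zero (hK : PreservesRankOnePSD K) (h0 : K 0 ≠ 0) {x : ℝ} (hx : 0 ≤ x) :
    K x = K 0 := by
  have := hK.apply_mul_self_mul_apply_mul_self √x 0
  rw [mul_self_sqrt hx, mul_zero, mul_zero] at this
  exact mul_right_cancel₀ h0 this

end PreservesRankOnePSD

theorem rank_one_preserver_two_by_two
    (K : ℝ → ℝ)
    (hK : ∀ A : Matrix (Fin 2) (Fin 2) ℝ, A.PosSemidef → A.rank ≤ 1 →
      (A.map K).PosSemidef ∧ (A.map K).rank ≤ 1)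
    (U : Set ℝ) (hU : U ∈ nhds (1 : ℝ))
    (hmeas : Measurable (U.restrict K))
    (hnz : ¬ (∀ x : ℝ, K x = 0)) :
    (∃ c : ℝ, 0 < c ∧ ∀ x : ℝ, 0 ≤ x → K x = c) ∨
      ∃ c : ℝ, 0 < c ∧ ∃ α : ℝ, K 0 = 0 ∧ ∀ x : ℝ, 0 < x → K x = c * x ^ α := by
  have hK : PreservesRankOnePSD K := hK
  have hpos : ∀ x, 0 < x → 0 < K x := fun x hx =>
    (hK.nonneg hx.le).lt_of_ne fun h => hnz (hK.eq_zero_of_apply_eq_zero hx h.symm)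
  by_cases h0 : K 0 = 0
  · obtain ⟨G, hG, hKG⟩ := hmeas.exists_measurable_eventuallyEq_of_domRestrict hU
    obtain ⟨α, hα⟩ := exists_eq_mul_rpow_of_map_mul hpos
      (fun x y hx hy => hK.apply_mul_mul_apply_one hx.le hy.le) hG hKG
    exact Or.inr ⟨K 1, hpos 1 one_pos, α, h0, hα⟩
  · exact Or.inl ⟨K 0, (hK.nonneg le_rfl).lt_of_ne' h0, fun x hx => hK.apply_eq_apply_zero h0 hx⟩
end

section
/- Let I ⊆ J ⊆ ℝ be intervals containing 0 as an interior point. If K : J → ℝ is Lebesgue measurable on I and satisfies K(x+y) = K(x)K(y) whenever x, y, x+y ∈ J, then either K ≡ 0 on J, or there exists β ∈ ℝ with K(x) = exp(βx) for all x ∈ J. -/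
/-!
If `K 0 = 0` then `K = 0` on `J`; otherwise `K 0 = 1`. Since `J` is convex, `K x = K (x / 2^n) ^ 2^n`,
and `K z * K (-z) = 1` near `0`, so `K > 0` on `J` and `f = log K` is additive wherever the equation
is imposed. On the neighbourhood `interior I` the function `f` is measurable, so some set
`E = {|f| ≤ n}` has positive measure, and by Steinhaus' theorem `f` is bounded by `2n` on the
neighbourhood `E - E` of `0`. A locally additive function bounded near `0` is linear near `0`, and the
halving identity spreads `K = exp (β ·)` from a neighbourhood of `0` to all of `J`.
-/

open Set Filter Topology MeasureTheory Pointwise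

def AddHomOn (f : ℝ → ℝ) (S : Set ℝ) : Prop :=
  ∀ x ∈ S, ∀ y ∈ S, x + y ∈ S → f (x + y) = f x + f y

def ExpHomOn (K : ℝ → ℝ) (S : Set ℝ) : Prop :=
  ∀ x ∈ S, ∀ y ∈ S, x + y ∈ S → K (x + y) = K x * K y

theorem Convex.div_two_pow_mem_s17 {J : Set ℝ} (hJ : Convex ℝ J) (h0 : 0 ∈ J) {x : ℝ} (hx : x ∈ J)
    (n : ℕ) : x / 2 ^ n ∈ J := by
  have := hJ.smul_mem_of_zero_mem h0 hx (t := (2 ^ n)⁻¹)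
    ⟨by positivity, inv_le_one_of_one_le₀ (one_le_pow₀ one_le_two)⟩
  rwa [smul_eq_mul, inv_mul_eq_div] at this

theorem tendsto_div_two_pow_nhds_zero (x : ℝ) :
    Tendsto (fun n : ℕ => x / 2 ^ n) atTop (𝓝 0) := by
  have h : Tendsto (fun n : ℕ => (1 / 2 : ℝ) ^ n) atTop (𝓝 0) :=
    tendsto_pow_atTop_nhds_zero_of_lt_one (by norm_num) (by norm_num)
  simpa [div_eq_mul_inv] using h.const_mul x

namespace AddHomOn

variable {f : ℝ → ℝ} {S : Set ℝ}

theorem mono {T : Set ℝ} (hf : AddHomOn f S) (hTS : T ⊆ S) : AddHomOn f T :=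
  fun x hx y hy hxy => hf x (hTS hx) y (hTS hy) (hTS hxy)

theorem sub_mul (hf : AddHomOn f S) (β : ℝ) : AddHomOn (fun x => f x - β * x) S := by
  intro x hx y hy hxy
  simp only [hf x hx y hy hxy]
  ring

theorem map_zero (hf : AddHomOn f S) (h0 : 0 ∈ S) : f 0 = 0 := by
  simpa using hf 0 h0 0 h0 (by simpa using h0)

theorem map_neg (hf : AddHomOn f S) (h0 : 0 ∈ S) {x : ℝ} (hx : x ∈ S) (hnx : -x ∈ S) :
    f (-x) = -f x := by
  have := hf x hx (-x) hnx (by simpa using h0)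
  rw [add_neg_cancel, hf.map_zero h0] at this
  linarith

/-- Iterating `y ↦ y + x` and subtracting `r` whenever the sum leaves `[0, r]` keeps a point
`y ∈ [0, r]` with `f y = n * f x`; boundedness then forces `f x = 0`. -/
theorem eqOn_zero_of_apply_eq_zero {r C : ℝ} (hf : AddHomOn f (Icc (-(2 * r)) (2 * r)))
    (hr : f r = 0) (hC : ∀ y ∈ Icc 0 r, |f y| ≤ C) : EqOn f 0 (Icc 0 r) := by
  intro x hx
  obtain ⟨hx0, hxr⟩ := hx
  have hmem : ∀ z, -(2 * r) ≤ z → z ≤ 2 * r → z ∈ Icc (-(2 * r)) (2 * r) := fun z h₁ h₂ => ⟨h₁, h₂⟩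
  have h0 : (0 : ℝ) ∈ Icc (-(2 * r)) (2 * r) := hmem 0 (by linarith) (by linarith)
  have hnr : f (-r) = 0 := by
    rw [hf.map_neg h0 (hmem r (by linarith) (by linarith)) (hmem (-r) (by linarith) (by linarith)),
      hr, neg_zero]
  have orbit : ∀ n : ℕ, ∃ y ∈ Icc 0 r, f y = n * f x := by
    intro n
    induction n with
    | zero => exact ⟨0, ⟨le_rfl, by linarith⟩, by simpa using hf.map_zero h0⟩
    | succ n ih =>
      obtain ⟨y, ⟨hy0, hyr⟩, hfy⟩ := ih
      have hyx : f (y + x) = (n + 1 : ℕ) * f x := by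
        rw [hf y (hmem y (by linarith) (by linarith)) x (hmem x (by linarith) (by linarith))
          (hmem _ (by linarith) (by linarith)), hfy]
        push_cast
        ring
      by_cases hle : y + x ≤ r
      · exact ⟨y + x, ⟨by linarith, hle⟩, hyx⟩
      · refine ⟨y + x + -r, ⟨by linarith, by linarith⟩, ?_⟩
        rw [hf _ (hmem _ (by linarith) (by linarith)) _ (hmem (-r) (by linarith) (by linarith))
          (hmem _ (by linarith) (by linarith)), hyx, hnr, add_zero]
  by_contra hne
  have hpos : 0 < |f x| := abs_pos.2 hne
  obtain ⟨n, hn⟩ := exists_nat_gt (C / |f x|)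
  obtain ⟨y, hy, hfy⟩ := orbit n
  have := hC y hy
  rw [hfy, abs_mul, Nat.abs_cast, ← le_div_iff₀ hpos] at this
  linarith

theorem eqOn_mul_of_bounded {r C : ℝ} (hf : AddHomOn f (Icc (-(2 * r)) (2 * r))) (hr : 0 < r)
    (hC : ∀ y ∈ Icc 0 r, |f y| ≤ C) : EqOn f (fun x => f r / r * x) (Icc (-r) r) := by
  set g := fun x => f x - f r / r * x
  have hg : AddHomOn g (Icc (-(2 * r)) (2 * r)) := hf.sub_mul _
  have hgC : ∀ y ∈ Icc 0 r, |g y| ≤ C + |f r| := by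
    intro y ⟨hy0, hyr⟩
    have hlin : |f r / r * y| ≤ |f r| := by
      rw [abs_mul, abs_div, abs_of_pos hr, abs_of_nonneg hy0, div_mul_eq_mul_div, div_le_iff₀ hr]
      gcongr
    calc |g y| ≤ |f y| + |f r / r * y| := abs_sub _ _
      _ ≤ C + |f r| := add_le_add (hC y ⟨hy0, hyr⟩) hlin
  have hgr : g r = 0 := by simp [g, hr.ne']
  have hg0 := hg.eqOn_zero_of_apply_eq_zero hgr hgC
  intro x ⟨hxl, hxr⟩
  suffices g x = 0 by simpa [g, sub_eq_zero] using this
  rcases le_total 0 x with hx | hx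
  · exact hg0 ⟨hx, hxr⟩
  · have h0 : (0 : ℝ) ∈ Icc (-(2 * r)) (2 * r) := ⟨by linarith, by linarith⟩
    rw [← neg_neg x, hg.map_neg h0 ⟨by linarith, by linarith⟩ ⟨by linarith, by linarith⟩,
      hg0 ⟨by linarith, by linarith⟩, Pi.zero_apply, neg_zero]

theorem exists_eventuallyEq_mul_of_bounded (hf : AddHomOn f S) (hS : S ∈ 𝓝 0) {C : ℝ}
    (hC : ∀ᶠ x in 𝓝 0, |f x| ≤ C) : ∃ β : ℝ, f =ᶠ[𝓝 0] fun x => β * x := by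
  obtain ⟨ε, hε, hball⟩ := Metric.mem_nhds_iff.1 (inter_mem hS hC)
  set r := ε / 3 with hr_def
  have hr : 0 < r := by positivity
  have hsub : Icc (-(2 * r)) (2 * r) ⊆ S ∩ {x | |f x| ≤ C} := by
    intro x ⟨h₁, h₂⟩
    apply hball
    rw [Metric.mem_ball, Real.dist_eq, sub_zero, abs_lt]
    constructor <;> linarith
  refine ⟨f r / r, mem_of_superset (Icc_mem_nhds (neg_lt_zero.2 hr) hr) ?_⟩
  exact (hf.mono fun x hx => (hsub hx).1).eqOn_mul_of_bounded hr
    fun y ⟨hy0, hyr⟩ => (hsub ⟨by linarith, by linarith⟩).2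

theorem exists_bound_of_measurable (hf : AddHomOn f S) (hS : MeasurableSet S) (hS0 : S ∈ 𝓝 0)
    (hfS : Measurable (S.domRestrict f)) :
    ∃ C : ℝ, ∀ᶠ x in 𝓝 0, |f x| ≤ C := by
  set E : ℕ → Set ℝ := fun n => S ∩ {x | |f x| ≤ n}
  have hE : ∀ n, MeasurableSet (E n) := fun n => by
    simp only [E]
    rw [← Subtype.image_preimage_coe]
    exact hS.subtype_image (hfS.abs measurableSet_Iic)
  have hSE : ⋃ n, E n = S := by
    refine (iUnion_subset fun n => inter_subset_left).antisymm fun x hx => ?_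
    obtain ⟨n, hn⟩ := exists_nat_ge |f x|
    exact mem_iUnion.2 ⟨n, hx, hn⟩
  obtain ⟨n, hn⟩ := exists_measure_pos_of_not_measure_iUnion_null
    (hSE ▸ (Measure.measure_pos_of_mem_nhds volume hS0).ne')
  refine ⟨2 * n, mem_of_superset
    (inter_mem (Measure.sub_mem_nhds_zero_of_addHaar_pos volume _ (hE n) hn) hS0) ?_⟩
  rintro z ⟨⟨a, ⟨haS, ha : |f a| ≤ n⟩, b, ⟨hbS, hb : |f b| ≤ n⟩, rfl⟩, hz⟩
  have hab := hf (a - b) hz b hbS (by simpa using haS)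
  rw [sub_add_cancel] at hab
  calc |f (a - b)| = |f a - f b| := by rw [hab, add_sub_cancel_right]
    _ ≤ |f a| + |f b| := abs_sub _ _
    _ ≤ 2 * n := by linarith

end AddHomOn

theorem expHomOn_exp_mul (β : ℝ) (S : Set ℝ) : ExpHomOn (fun x => Real.exp (β * x)) S :=
  fun x _ y _ _ => by simp only [mul_add, Real.exp_add]

namespace ExpHomOn

variable {K : ℝ → ℝ} {J : Set ℝ}

theorem apply_zero_eq_zero_or_one (hK : ExpHomOn K J) (h0 : 0 ∈ J) : K 0 = 0 ∨ K 0 = 1 := by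
  have := hK 0 h0 0 h0 (by simpa using h0)
  rw [add_zero, eq_comm] at this
  by_cases hK0 : K 0 = 0
  · exact Or.inl hK0
  · exact Or.inr ((mul_eq_left₀ hK0).1 this)

theorem eqOn_zero_of_apply_zero (hK : ExpHomOn K J) (h0 : 0 ∈ J) (hK0 : K 0 = 0) :
    EqOn K 0 J := fun x hx => by
  simpa [hK0] using hK x hx 0 h0 (by simpa using hx)

theorem addHomOn_log (hK : ExpHomOn K J) (hne : ∀ x ∈ J, K x ≠ 0) :
    AddHomOn (fun x => Real.log (K x)) J := fun x hx y hy hxy => by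
  simp only [hK x hx y hy hxy, Real.log_mul (hne x hx) (hne y hy)]

theorem pow_two_pow_div (hK : ExpHomOn K J) (hJ : Convex ℝ J) (h0 : 0 ∈ J) {x : ℝ} (hx : x ∈ J)
    (n : ℕ) : K (x / 2 ^ n) ^ 2 ^ n = K x := by
  induction n with
  | zero => simp
  | succ n ih =>
    have hhalf : x / 2 ^ (n + 1) + x / 2 ^ (n + 1) = x / 2 ^ n := by ring
    have hmem := hJ.div_two_pow_mem_s17 h0 hx (n + 1)
    have := hK _ hmem _ hmem (hhalf ▸ hJ.div_two_pow_mem_s17 h0 hx n)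
    rw [hhalf] at this
    rw [pow_succ' (2 : ℕ) n, pow_mul, sq, ← this, ih]

theorem eqOn_of_eventuallyEq {L : ℝ → ℝ} (hK : ExpHomOn K J) (hL : ExpHomOn L J)
    (hJ : Convex ℝ J) (h0 : 0 ∈ J) (hKL : K =ᶠ[𝓝 0] L) : EqOn K L J := by
  intro x hx
  obtain ⟨n, hn⟩ := ((tendsto_div_two_pow_nhds_zero x).eventually hKL).exists
  rw [← hK.pow_two_pow_div hJ h0 hx n, ← hL.pow_two_pow_div hJ h0 hx n, hn]

theorem apply_ne_zero (hK : ExpHomOn K J) (hJ : Convex ℝ J) (h0 : J ∈ 𝓝 0) (hK0 : K 0 = 1)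
    {x : ℝ} (hx : x ∈ J) : K x ≠ 0 := by
  have hne : ∀ᶠ z in 𝓝 0, K z ≠ 0 := by
    filter_upwards [h0, neg_mem_nhds_zero ℝ h0] with z hz hnz
    have := hK z hz (-z) hnz (by simpa using mem_of_mem_nhds h0)
    rw [add_neg_cancel, hK0] at this
    exact left_ne_zero_of_mul_eq_one this.symm
  obtain ⟨n, hn⟩ := ((tendsto_div_two_pow_nhds_zero x).eventually hne).exists
  rw [← hK.pow_two_pow_div hJ (mem_of_mem_nhds h0) hx n]
  exact pow_ne_zero _ hn

theorem apply_pos (hK : ExpHomOn K J) (hJ : Convex ℝ J) (h0 : J ∈ 𝓝 0) (hK0 : K 0 = 1)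
    {x : ℝ} (hx : x ∈ J) : 0 < K x := by
  have hJ0 := mem_of_mem_nhds h0
  rw [← hK.pow_two_pow_div hJ hJ0 hx 1]
  exact Even.pow_pos (by decide) (hK.apply_ne_zero hJ h0 hK0 (hJ.div_two_pow_mem_s17 hJ0 hx 1))

end ExpHomOn

theorem exponential_cauchy_locally_measurable_general
    (I J : Set ℝ) (hIJ : I ⊆ J) (hJconv : Convex ℝ J)
    (h0I : (0 : ℝ) ∈ interior I)
    (K : ℝ → ℝ)
    (hmeas : Measurable (I.restrict K))
    (heq : ∀ x ∈ J, ∀ y ∈ J, x + y ∈ J → K (x + y) = K x * K y) :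
    (∀ x ∈ J, K x = 0) ∨ ∃ β : ℝ, ∀ x ∈ J, K x = Real.exp (β * x) := by
  have hK : ExpHomOn K J := heq
  have hU : interior I ∈ 𝓝 0 := isOpen_interior.mem_nhds h0I
  have hUJ : interior I ⊆ J := interior_subset.trans hIJ
  have hJ : J ∈ 𝓝 0 := mem_of_superset hU hUJ
  rcases hK.apply_zero_eq_zero_or_one (mem_of_mem_nhds hJ) with hK0 | hK0
  · exact Or.inl (hK.eqOn_zero_of_apply_zero (mem_of_mem_nhds hJ) hK0)
  have hpos : ∀ x ∈ J, 0 < K x := fun x hx => hK.apply_pos hJconv hJ hK0 hx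
  have hlog := hK.addHomOn_log fun x hx => (hpos x hx).ne'
  have hlog_meas : Measurable ((interior I).domRestrict fun x => Real.log (K x)) :=
    Real.measurable_log.comp (hmeas.comp (measurable_inclusion interior_subset))
  obtain ⟨C, hC⟩ :=
    (hlog.mono hUJ).exists_bound_of_measurable isOpen_interior.measurableSet hU hlog_meas
  obtain ⟨β, hβ⟩ := hlog.exists_eventuallyEq_mul_of_bounded hJ hC
  refine Or.inr ⟨β, hK.eqOn_of_eventuallyEq (expHomOn_exp_mul β J) hJconv (mem_of_mem_nhds hJ) ?_⟩
  filter_upwards [hβ, hJ] with x hx hxJ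
  rw [← hx, Real.exp_log (hpos x hxJ)]

theorem exponential_cauchy_locally_measurable
    (I J : Set ℝ) (hIJ : I ⊆ J) (hIconv : Convex ℝ I) (hJconv : Convex ℝ J)
    (h0I : (0 : ℝ) ∈ interior I)
    (K : ℝ → ℝ)
    (hmeas : Measurable (I.restrict K))
    (heq : ∀ x ∈ J, ∀ y ∈ J, x + y ∈ J → K (x + y) = K x * K y) :
    (∀ x ∈ J, K x = 0) ∨ ∃ β : ℝ, ∀ x ∈ J, K x = Real.exp (β * x) :=
  exponential_cauchy_locally_measurable_general I J hIJ hJconv h0I K hmeas heq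
end
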